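/- Suppose the sink Z is nonempty and V∖Z is finite. Then the matrix I − P_Z is invertible, and for all vertices a, x ∈ V∖Z, the average over ρ ∈ SF(Z) of the odometer u(a,Z;ρ)(x) (which is finite for every ρ) equals the Green function ((I − P_Z)^{-1})_{a,x}. -/

import Mathlib

open Classical

universe u

variable {V : Type u}

/-- A rotor mechanism: for each vertex `x`, `τ x` restricts to a bijection of the
neighbor set of `x` having a single orbit. -/
def IsMechanism (G : SimpleGraph V) (τ : V → V → V) : Prop :=
  ∀ x : V, Set.BijOn (τ x) (G.neighborSet x) (G.neighborSet x) ∧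
    ∀ y ∈ G.neighborSet x, ∀ z ∈ G.neighborSet x, ∃ i : ℕ, (τ x)^[i] y = z

/-- One step of the rotor walk with sink `Z`; the walk freezes once it reaches `Z`. -/
noncomputable def rotorStep [DecidableEq V] (τ : V → V → V) (Z : Set V) :
    V × (V → V) → V × (V → V) := fun p =>
  if p.1 ∈ Z then p
  else (τ p.1 (p.2 p.1), Function.update p.2 p.1 (τ p.1 (p.2 p.1)))

/-- The rotor walk with initial location `a`, sink `Z` and initial rotor
configuration `ρ`: position (first component) and rotor configuration
(second component) at time `t`. -/
noncomputable def rotorWalk [DecidableEq V] (τ : V → V → V) (Z : Set V)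
    (a : V) (ρ : V → V) (t : ℕ) : V × (V → V) :=
  (rotorStep τ Z)^[t] (a, ρ)

/-- `Z`-oriented spanning forests of `G`, viewed as rotor configurations,
normalized to be the identity on `Z` (the values on `Z` are inconsequential). -/
def SFset (G : SimpleGraph V) (Z : Set V) : Set (V → V) :=
  {ρ | (∀ x ∉ Z, G.Adj x (ρ x)) ∧ (∀ x : V, ∃ ℓ : ℕ, ρ^[ℓ] x ∈ Z) ∧ ∀ x ∈ Z, ρ x = x}

/-- The eventual value of an eventually-constant sequence. -/
noncomputable def eventualVal (f : ℕ → V) : V :=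
  if h : ∃ t : ℕ, ∀ s : ℕ, t ≤ s → f s = f t then f h.choose else f 0

/-- The final rotor configuration `σ(a, Z; ρ)` of the rotor walk. -/
noncomputable def finalConfig [DecidableEq V] (τ : V → V → V) (Z : Set V)
    (a : V) (ρ : V → V) : V → V :=
  fun x => eventualVal fun t => (rotorWalk τ Z a ρ t).2 x

/-- `ξ_i(a_0, …, a_{i-1}, Z; ρ)`: the rotor configuration after `i` successive
walkers, started at `a_0, …, a_{i-1}`, have performed rotor walks with sink `Z`. -/
noncomputable def xiConfig [DecidableEq V] (τ : V → V → V) (Z : Set V) (av : ℕ → V) :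
    ℕ → (V → V) → (V → V)
  | 0, ρ => ρ
  | i + 1, ρ => finalConfig τ Z (av i) (xiConfig τ Z av i ρ)

/-- The set of times at which the rotor walk (run until it first reaches the
sink `Z`) is at a vertex of `W`; its cardinality is the odometer `u(a,Z;ρ)(W)`. -/
def visitTimes [DecidableEq V] (τ : V → V → V) (Z : Set V) (a : V) (ρ : V → V)
    (W : Set V) : Set ℕ :=
  {t | (rotorWalk τ Z a ρ t).1 ∈ W ∧ ∀ s < t, (rotorWalk τ Z a ρ s).1 ∉ Z}

/-- The event `E_{r,W}(a,Z)`: the rotor walk with initial location `a` and sink `Z`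
visits `W` some time after visiting a vertex at graph distance at least `r` from `W`. -/
def Eset [DecidableEq V] (G : SimpleGraph V) (τ : V → V → V) (r : ℕ) (W : Set V)
    (a : V) (Z : Set V) : Set (V → V) :=
  {ρ | ∃ t₁ t₂ : ℕ, t₁ < t₂ ∧ (∀ s < t₂, (rotorWalk τ Z a ρ s).1 ∉ Z) ∧
    (∀ w ∈ W, r ≤ G.dist w (rotorWalk τ Z a ρ t₁).1) ∧ (rotorWalk τ Z a ρ t₂).1 ∈ W}

/-- The event `D_r` (relative to the set `Z`): there is an oriented path in `ρ`
from a vertex at graph distance exactly `r` from `Z` to a vertex of `Z`. -/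
def Dset (G : SimpleGraph V) (Z : Set V) (r : ℕ) : Set (V → V) :=
  {ρ | ∃ x : V, ∃ ℓ : ℕ, (∀ w ∈ Z, r ≤ G.dist w x) ∧ (∃ w ∈ Z, G.dist w x = r) ∧
    ρ^[ℓ] x ∈ Z}

/-- The transition matrix `P_Z` of simple random walk on `G` killed upon hitting `Z`. -/
noncomputable def killedP (G : SimpleGraph V) [∀ v : V, Fintype (G.neighborSet v)]
    (Z : Set V) : Matrix {x : V // x ∉ Z} {x : V // x ∉ Z} ℝ :=
  fun x y => if G.Adj x.1 y.1 then (1 : ℝ) / (G.degree x.1) else 0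

/-- The Green function `((I - P_Z)⁻¹)_{a,x}` of simple random walk killed at `Z`,
as a function of a pair of vertices (zero if `V ∖ Z` is infinite or `a ∈ Z` or `x ∈ Z`). -/
noncomputable def greenFn (G : SimpleGraph V) [DecidableEq V]
    [∀ v : V, Fintype (G.neighborSet v)] (Z : Set V) (a x : V) : ℝ :=
  if h : ({y : V | y ∉ Z}).Finite ∧ a ∉ Z ∧ x ∉ Z then
    letI : Fintype {y : V // y ∉ Z} := h.1.fintype
    ((1 - killedP G Z)⁻¹) ⟨a, h.2.1⟩ ⟨x, h.2.2⟩
  else 0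


/-!
For `ρ ∈ SF(Z)` the walk reaches `Z`: a vertex visited infinitely often would force all its
neighbours, and in the end a vertex of `Z`, to be visited infinitely often. Counting the steps
into `x` gives `u(x) = [a = x] + ∑_y #(y → x)`. As the rotor at `y` runs cyclically through the
neighbours of `y`, `deg y · #(y → x) = u(y) + φ(σ y) - φ(ρ y)`, where `σ` is the final
configuration and `φ` counts the turns still needed until the rotor points at `x`.

The map `ρ ↦ σ` permutes `SF(Z)`: following the rotors from any vertex always leads to `Z` or
to the walker, so `σ` is again a forest; and the walk can be run backwards, the rotor set last
being the one into the walker's position on the cycle through it, or else on the rotor path from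
`a`. Averaging over `SF(Z)` therefore cancels the `φ`-terms and leaves `ū (I - P_Z) = e_a`, so
the matrix of average odometers is a left inverse of `I - P_Z`.
-/

theorem sum_ite_val_eq [DecidableEq V] {M : Type*} [AddCommMonoid M] {p : V → Prop}
    [Fintype {y // p y}] (v : V) (c : M) :
    ∑ y : {y // p y}, (if v = y.1 then c else 0) = if p v then c else 0 := by
  split_ifs with hv
  · simpa [Subtype.ext_iff] using Fintype.sum_ite_eq (⟨v, hv⟩ : {y // p y}) (fun _ => c)
  · exact Finset.sum_eq_zero fun y _ => if_neg fun h : v = y.1 => hv (h ▸ y.2)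

/-- `turnsUntil τ y r w + 1` is the number of turns the rotor at `y`, currently pointing at `r`,
needs until it points at `w`. -/
noncomputable def turnsUntil (τ : V → V → V) (y r w : V) : ℕ :=
  sInf {j | (τ y)^[j + 1] r = w}

namespace IsMechanism

variable {G : SimpleGraph V} {τ : V → V → V}

theorem iterate_mem (hτ : IsMechanism G τ) {x y : V} (hy : y ∈ G.neighborSet x) (i : ℕ) :
    (τ x)^[i] y ∈ G.neighborSet x :=
  (hτ x).1.mapsTo.iterate i hy

theorem mem_periodicPts (hτ : IsMechanism G τ) {x y : V} (hy : y ∈ G.neighborSet x) :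
    y ∈ Function.periodicPts (τ x) := by
  obtain ⟨i, hi⟩ := (hτ x).2 _ ((hτ x).1.mapsTo hy) y hy
  exact ⟨i + 1, i.succ_pos, by rw [Function.IsPeriodicPt, Function.IsFixedPt,
    Function.iterate_succ_apply, hi]⟩

theorem minimalPeriod_eq_degree [∀ v : V, Fintype (G.neighborSet v)] (hτ : IsMechanism G τ)
    {x y : V} (hy : y ∈ G.neighborSet x) : Function.minimalPeriod (τ x) y = G.degree x := by
  have horbit : (Finset.range (Function.minimalPeriod (τ x) y)).image (fun i => (τ x)^[i] y)
      = G.neighborFinset x := by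
    ext z
    simp only [Finset.mem_image, Finset.mem_range, SimpleGraph.mem_neighborFinset]
    constructor
    · rintro ⟨i, -, rfl⟩
      exact hτ.iterate_mem hy i
    · intro hz
      obtain ⟨i, rfl⟩ := (hτ x).2 y hy z hz
      exact ⟨_, Nat.mod_lt _ (Function.minimalPeriod_pos_of_mem_periodicPts
        (hτ.mem_periodicPts hy)), Function.iterate_mod_minimalPeriod_eq⟩
  rw [← SimpleGraph.card_neighborFinset_eq_degree, ← horbit, Finset.card_image_of_injOn,
    Finset.card_range]
  exact fun i hi j hj => Function.iterate_injOn_Iio_minimalPeriod (by simpa using hi)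
    (by simpa using hj)

theorem turnsUntil_spec (hτ : IsMechanism G τ) {y r w : V} (hr : r ∈ G.neighborSet y)
    (hw : w ∈ G.neighborSet y) : (τ y)^[turnsUntil τ y r w + 1] r = w := by
  obtain ⟨i, hi⟩ := (hτ y).2 _ ((hτ y).1.mapsTo hr) w hw
  exact Nat.sInf_mem (s := {j | (τ y)^[j + 1] r = w}) ⟨i, by
    rwa [Set.mem_ofPred_eq, Function.iterate_succ_apply]⟩

theorem turnsUntil_self [∀ v : V, Fintype (G.neighborSet v)] (hτ : IsMechanism G τ) {y w : V}
    (hw : w ∈ G.neighborSet y) :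
    turnsUntil τ y w w + 1 = G.degree y := by
  rw [← hτ.minimalPeriod_eq_degree hw]
  have hpos := Function.minimalPeriod_pos_of_mem_periodicPts (hτ.mem_periodicPts hw)
  refine le_antisymm ?_ ?_
  · have : Function.minimalPeriod (τ y) w - 1 + 1 = Function.minimalPeriod (τ y) w := by omega
    have hmem : Function.minimalPeriod (τ y) w - 1 ∈ {j | (τ y)^[j + 1] w = w} := by
      rw [Set.mem_ofPred_eq, this]
      exact Function.isPeriodicPt_minimalPeriod _ _
    have := Nat.sInf_le hmem
    unfold turnsUntil
    omega
  · exact Function.IsPeriodicPt.minimalPeriod_le (Nat.succ_pos _) (hτ.turnsUntil_spec hw hw)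

theorem turnsUntil_apply_add_one [∀ v : V, Fintype (G.neighborSet v)]
    (hτ : IsMechanism G τ) {y r w : V} (hr : r ∈ G.neighborSet y)
    (hw : w ∈ G.neighborSet y) :
    turnsUntil τ y (τ y r) w + 1 = turnsUntil τ y r w + if τ y r = w then G.degree y else 0 := by
  split_ifs with h
  · have h0 : turnsUntil τ y r w = 0 :=
      Nat.sInf_eq_zero.2 (Or.inl (by rwa [Set.mem_ofPred_eq, Function.iterate_one]))
    rw [h, h0, zero_add, hτ.turnsUntil_self hw]
  · have hr' : τ y r ∈ G.neighborSet y := (hτ y).1.mapsTo hr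
    refine le_antisymm ?_ (Nat.sInf_le ?_)
    · have hspec := hτ.turnsUntil_spec hr hw
      obtain ⟨j, hj⟩ : ∃ j, turnsUntil τ y r w = j + 1 := by
        refine Nat.exists_eq_succ_of_ne_zero fun h0 => h ?_
        rwa [h0, Function.iterate_one] at hspec
      rw [hj, Function.iterate_succ_apply] at hspec
      rw [hj, add_zero, add_le_add_iff_right]
      exact Nat.sInf_le hspec
    · rw [Set.mem_ofPred_eq, Function.iterate_succ_apply]
      exact hτ.turnsUntil_spec hr' hw

end IsMechanism

section RotorWalk

variable [DecidableEq V] {G : SimpleGraph V} {τ : V → V → V} {Z : Set V} {a : V} {ρ : V → V}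

@[simp]
theorem rotorWalk_zero : rotorWalk τ Z a ρ 0 = (a, ρ) := rfl

theorem rotorWalk_succ (t : ℕ) :
    rotorWalk τ Z a ρ (t + 1) = rotorStep τ Z (rotorWalk τ Z a ρ t) :=
  Function.iterate_succ_apply' _ _ _

theorem rotorWalk_succ_of_mem {t : ℕ} (h : (rotorWalk τ Z a ρ t).1 ∈ Z) :
    rotorWalk τ Z a ρ (t + 1) = rotorWalk τ Z a ρ t := by
  rw [rotorWalk_succ, rotorStep, if_pos h]

theorem rotorWalk_succ_of_notMem {t : ℕ} (h : (rotorWalk τ Z a ρ t).1 ∉ Z) :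
    rotorWalk τ Z a ρ (t + 1) =
      ((τ (rotorWalk τ Z a ρ t).1 ((rotorWalk τ Z a ρ t).2 (rotorWalk τ Z a ρ t).1)),
        Function.update (rotorWalk τ Z a ρ t).2 (rotorWalk τ Z a ρ t).1
          (τ (rotorWalk τ Z a ρ t).1 ((rotorWalk τ Z a ρ t).2 (rotorWalk τ Z a ρ t).1))) := by
  rw [rotorWalk_succ, rotorStep, if_neg h]

theorem rotorWalk_fst_succ_of_notMem {t : ℕ} (h : (rotorWalk τ Z a ρ t).1 ∉ Z) :
    (rotorWalk τ Z a ρ (t + 1)).1 =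
      τ (rotorWalk τ Z a ρ t).1 ((rotorWalk τ Z a ρ t).2 (rotorWalk τ Z a ρ t).1) := by
  rw [rotorWalk_succ_of_notMem h]

theorem rotorWalk_snd_succ_self {t : ℕ} (h : (rotorWalk τ Z a ρ t).1 ∉ Z) :
    (rotorWalk τ Z a ρ (t + 1)).2 (rotorWalk τ Z a ρ t).1 =
      τ (rotorWalk τ Z a ρ t).1 ((rotorWalk τ Z a ρ t).2 (rotorWalk τ Z a ρ t).1) := by
  rw [rotorWalk_succ_of_notMem h]
  exact Function.update_self _ _ _

theorem rotorWalk_snd_succ_of_notMem {t : ℕ} (h : (rotorWalk τ Z a ρ t).1 ∉ Z) :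
    (rotorWalk τ Z a ρ (t + 1)).2 = Function.update (rotorWalk τ Z a ρ t).2
      (rotorWalk τ Z a ρ t).1 (rotorWalk τ Z a ρ (t + 1)).1 := by
  rw [rotorWalk_succ_of_notMem h]

theorem rotorWalk_eq_of_mem {t s : ℕ} (h : (rotorWalk τ Z a ρ t).1 ∈ Z) (hts : t ≤ s) :
    rotorWalk τ Z a ρ s = rotorWalk τ Z a ρ t := by
  induction s, hts using Nat.le_induction with
  | base => rfl
  | succ s _ ih => rw [rotorWalk_succ_of_mem (ih ▸ h), ih]

theorem rotorWalk_snd_succ_of_ne {t : ℕ} {y : V} (hy : y ≠ (rotorWalk τ Z a ρ t).1) :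
    (rotorWalk τ Z a ρ (t + 1)).2 y = (rotorWalk τ Z a ρ t).2 y := by
  by_cases h : (rotorWalk τ Z a ρ t).1 ∈ Z
  · rw [rotorWalk_succ_of_mem h]
  · rw [rotorWalk_succ_of_notMem h]
    exact Function.update_of_ne hy _ _

theorem rotorWalk_snd_of_mem {y : V} (hy : y ∈ Z) (t : ℕ) :
    (rotorWalk τ Z a ρ t).2 y = ρ y := by
  induction t with
  | zero => rfl
  | succ t ih =>
    by_cases h : (rotorWalk τ Z a ρ t).1 ∈ Z
    · rw [rotorWalk_succ_of_mem h, ih]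
    · rw [rotorWalk_snd_succ_of_ne (ne_of_mem_of_not_mem hy h), ih]

theorem rotorWalk_snd_mem_neighborSet (hτ : IsMechanism G τ) {y : V}
    (hy : ρ y ∈ G.neighborSet y) (t : ℕ) : (rotorWalk τ Z a ρ t).2 y ∈ G.neighborSet y := by
  induction t with
  | zero => exact hy
  | succ t ih =>
    by_cases h : (rotorWalk τ Z a ρ t).1 ∈ Z
    · rwa [rotorWalk_succ_of_mem h]
    obtain rfl | hne := eq_or_ne y (rotorWalk τ Z a ρ t).1
    · rw [rotorWalk_snd_succ_self h]
      exact (hτ _).1.mapsTo ih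
    · rwa [rotorWalk_snd_succ_of_ne hne]

theorem adj_rotorWalk_succ (hτ : IsMechanism G τ) (hρ : ∀ x ∉ Z, ρ x ∈ G.neighborSet x)
    {t : ℕ} (h : (rotorWalk τ Z a ρ t).1 ∉ Z) :
    G.Adj (rotorWalk τ Z a ρ t).1 (rotorWalk τ Z a ρ (t + 1)).1 := by
  rw [rotorWalk_fst_succ_of_notMem h]
  exact (hτ _).1.mapsTo (rotorWalk_snd_mem_neighborSet hτ (hρ _ h) t)

end RotorWalk

section Counting

variable [DecidableEq V] {G : SimpleGraph V} {τ : V → V → V} {Z : Set V} {a : V} {ρ : V → V}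

noncomputable def visitCount (τ : V → V → V) (Z : Set V) (a : V) (ρ : V → V) (x : V) (t : ℕ) :
    ℕ :=
  ∑ s ∈ Finset.range t, if (rotorWalk τ Z a ρ s).1 = x then 1 else 0

noncomputable def transitionCount (τ : V → V → V) (Z : Set V) (a : V) (ρ : V → V) (y w : V)
    (t : ℕ) : ℕ :=
  ∑ s ∈ Finset.range t,
    if (rotorWalk τ Z a ρ s).1 = y ∧ (rotorWalk τ Z a ρ (s + 1)).1 = w then 1 else 0

theorem degree_mul_transitionCount_add_turnsUntil [∀ v : V, Fintype (G.neighborSet v)]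
    (hτ : IsMechanism G τ) {y w : V} (hy : y ∉ Z) (hρ : ρ y ∈ G.neighborSet y)
    (hw : w ∈ G.neighborSet y) (t : ℕ) :
    G.degree y * transitionCount τ Z a ρ y w t + turnsUntil τ y (ρ y) w
      = visitCount τ Z a ρ y t + turnsUntil τ y ((rotorWalk τ Z a ρ t).2 y) w := by
  induction t with
  | zero => simp [visitCount, transitionCount]
  | succ t ih =>
    simp only [visitCount, transitionCount, Finset.sum_range_succ] at ih ⊢
    by_cases hyt : (rotorWalk τ Z a ρ t).1 = y
    · have hstep := hτ.turnsUntil_apply_add_one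
        (rotorWalk_snd_mem_neighborSet (a := a) (Z := Z) hτ hρ t) hw
      have hZ : (rotorWalk τ Z a ρ t).1 ∉ Z := hyt ▸ hy
      have hX := rotorWalk_fst_succ_of_notMem hZ
      have hC := rotorWalk_snd_succ_self hZ
      rw [hyt] at hX hC
      rw [hX, hC]
      simp only [hyt, true_and, if_true]
      split_ifs at hstep ⊢ <;> linarith
    · rw [rotorWalk_snd_succ_of_ne (Ne.symm hyt)]
      simp only [hyt, false_and, if_false, add_zero, ih]

theorem visitCount_succ [Fintype {y // y ∉ Z}] {x : V} (hx : x ∉ Z) (t : ℕ) :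
    visitCount τ Z a ρ x (t + 1)
      = (if a = x then 1 else 0) + ∑ y : {y // y ∉ Z}, transitionCount τ Z a ρ y.1 x t := by
  have hstep (s : ℕ) : ∑ y : {y // y ∉ Z},
      (if (rotorWalk τ Z a ρ s).1 = y.1 ∧ (rotorWalk τ Z a ρ (s + 1)).1 = x then 1 else 0)
      = if (rotorWalk τ Z a ρ (s + 1)).1 = x then 1 else 0 := by
    simp_rw [ite_and]
    rw [sum_ite_val_eq]
    by_cases hZ : (rotorWalk τ Z a ρ s).1 ∈ Z
    · rw [if_neg (not_not.2 hZ), rotorWalk_succ_of_mem hZ, if_neg (ne_of_mem_of_not_mem hZ hx)]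
    · rw [if_pos hZ]
  simp only [visitCount, transitionCount]
  rw [Finset.sum_range_succ', Finset.sum_comm]
  simp only [hstep, rotorWalk_zero]
  exact add_comm _ _

theorem transitionCount_eq_zero_of_not_adj (hτ : IsMechanism G τ)
    (hρ : ∀ x ∉ Z, ρ x ∈ G.neighborSet x) {y w : V} (hy : y ∉ Z) (hyw : ¬ G.Adj y w) (t : ℕ) :
    transitionCount τ Z a ρ y w t = 0 := by
  refine Finset.sum_eq_zero fun s _ => if_neg ?_
  rintro ⟨h1, h2⟩
  exact hyw (h1 ▸ h2 ▸ adj_rotorWalk_succ hτ hρ (h1 ▸ hy))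

end Counting

section Termination

variable [DecidableEq V] {G : SimpleGraph V} {τ : V → V → V} {Z : Set V} {a : V} {ρ : V → V}

theorem sum_visitCount [Fintype {y // y ∉ Z}] (h : ∀ s, (rotorWalk τ Z a ρ s).1 ∉ Z) (t : ℕ) :
    ∑ x : {y // y ∉ Z}, visitCount τ Z a ρ x.1 t = t := by
  simp only [visitCount]
  rw [Finset.sum_comm]
  simp only [sum_ite_val_eq, h, not_false_eq_true, if_true, Finset.sum_const, Finset.card_range,
    smul_eq_mul, mul_one]

theorem transitionCount_le_visitCount (y w : V) (t : ℕ) :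
    transitionCount τ Z a ρ y w t ≤ visitCount τ Z a ρ w (t + 1) := by
  rw [visitCount, Finset.sum_range_succ']
  refine le_add_right (Finset.sum_le_sum fun s _ => ?_)
  split_ifs <;> simp_all

theorem exists_rotorWalk_eq_of_not_bddAbove {x : V}
    (h : ¬ BddAbove (Set.range (visitCount τ Z a ρ x))) : ∃ s, (rotorWalk τ Z a ρ s).1 = x := by
  by_contra hx
  push Not at hx
  exact h ⟨0, by rintro _ ⟨t, rfl⟩; simp [visitCount, hx]⟩

theorem bddAbove_visitCount_of_adj [∀ v : V, Fintype (G.neighborSet v)] (hτ : IsMechanism G τ)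
    {y w : V} (hy : y ∉ Z) (hρ : ρ y ∈ G.neighborSet y) (hw : w ∈ G.neighborSet y)
    (hbdd : BddAbove (Set.range (visitCount τ Z a ρ w))) :
    BddAbove (Set.range (visitCount τ Z a ρ y)) := by
  obtain ⟨B, hB⟩ := hbdd
  refine ⟨G.degree y * B + turnsUntil τ y (ρ y) w, ?_⟩
  rintro _ ⟨t, rfl⟩
  have hid := degree_mul_transitionCount_add_turnsUntil (a := a) hτ hy hρ hw t
  have htr : transitionCount τ Z a ρ y w t ≤ B :=
    (transitionCount_le_visitCount y w t).trans (hB ⟨t + 1, rfl⟩)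
  have := Nat.mul_le_mul_left (G.degree y) htr
  omega

theorem exists_rotorWalk_mem [∀ v : V, Fintype (G.neighborSet v)] [Fintype {y // y ∉ Z}]
    (hconn : G.Connected) (hZ : Z.Nonempty) (hτ : IsMechanism G τ)
    (hρ : ∀ x ∉ Z, ρ x ∈ G.neighborSet x) : ∃ t, (rotorWalk τ Z a ρ t).1 ∈ Z := by
  by_contra hnot
  push Not at hnot
  obtain ⟨x, hx⟩ : ∃ x : {y // y ∉ Z}, ¬ BddAbove (Set.range (visitCount τ Z a ρ x.1)) := by
    by_contra hall
    push Not at hall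
    choose B hB using hall
    have := sum_visitCount hnot (∑ x, B x + 1)
    have : ∑ x : {y // y ∉ Z}, visitCount τ Z a ρ x.1 (∑ x, B x + 1) ≤ ∑ x, B x :=
      Finset.sum_le_sum fun x _ => hB x ⟨_, rfl⟩
    omega
  obtain ⟨z, hz⟩ := hZ
  suffices ∀ u, G.Walk u z → ¬ BddAbove (Set.range (visitCount τ Z a ρ u)) → False from
    this x.1 (hconn x.1 z).some hx
  intro u p
  induction p with
  | nil =>
    intro hu
    obtain ⟨s, hs⟩ := exists_rotorWalk_eq_of_not_bddAbove hu
    exact hnot s (hs ▸ hz)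
  | @cons u v _ huv _ ih =>
    intro hu
    obtain ⟨s, hs⟩ := exists_rotorWalk_eq_of_not_bddAbove hu
    have huZ : u ∉ Z := hs ▸ hnot s
    exact ih hz fun hv => hu (bddAbove_visitCount_of_adj hτ huZ (hρ u huZ) huv hv)

end Termination

section WalkState

variable {Z : Set V} {a v w : V} {f : V → V}

theorem iterate_notMem_of_isPeriodicPt (hfix : ∀ z ∈ Z, f z = z) {x : V} {k : ℕ} (hk : 0 < k)
    (hper : Function.IsPeriodicPt f k x) (hx : x ∉ Z) (j : ℕ) : f^[j] x ∉ Z := by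
  intro hj
  have hret : f^[k * j] x = x := hper.mul_const j
  rw [← Nat.sub_add_cancel (Nat.le_mul_of_pos_left j hk), Function.iterate_add_apply,
    Function.iterate_fixed (hfix _ hj)] at hret
  exact hx (hret ▸ hj)

theorem not_isPeriodicPt_of_mem_SFset {G : SimpleGraph V} {ρ : V → V} (hρ : ρ ∈ SFset G Z)
    {x : V} (hx : x ∉ Z) {k : ℕ} (hk : 0 < k) : ¬ Function.IsPeriodicPt ρ k x := fun hper =>
  let ⟨n, hn⟩ := hρ.2.1 x
  iterate_notMem_of_isPeriodicPt hρ.2.2 hk hper hx n hn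

/-- The invariant of the rotor walk from `a`, started on a spanning forest, while the walker is
at `v` and the rotors are `f`. -/
structure IsWalkState (Z : Set V) (a v : V) (f : V → V) : Prop where
  rooted : ∀ x, ∃ n, f^[n] x ∈ insert v Z
  reaches : ∃ n, f^[n] a = v ∧ ∀ i < n, f^[i] a ∉ Z

namespace IsWalkState

theorem exists_first_hit (h : IsWalkState Z a v f) :
    ∃ n, f^[n] a = v ∧ ∀ i < n, f^[i] a ∉ Z ∧ f^[i] a ≠ v := by
  obtain ⟨n, hn, hnZ⟩ := h.reaches
  have hex : ∃ n, f^[n] a = v := ⟨n, hn⟩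
  exact ⟨Nat.find hex, Nat.find_spec hex, fun i hi =>
    ⟨hnZ i (hi.trans_le (Nat.find_min' hex hn)), Nat.find_min hex hi⟩⟩

theorem eq_of_mem {v' : V} (h : IsWalkState Z a v f) (h' : IsWalkState Z a v' f) (hv : v ∈ Z)
    (hv' : v' ∈ Z) : v = v' := by
  obtain ⟨n, hn, hnZ⟩ := h.reaches
  obtain ⟨n', hn', hnZ'⟩ := h'.reaches
  obtain hlt | rfl | hlt := lt_trichotomy n n'
  · exact absurd (hn ▸ hv) (hnZ' n hlt)
  · exact hn.symm.trans hn'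
  · exact absurd (hn' ▸ hv') (hnZ n' hlt)

end IsWalkState

variable [DecidableEq V]

/-- The walker's previous position, read off from its current position `w` and configuration `f`:
the rotor that was just set is the one into `w` on the cycle through `w` if there is one, and
otherwise the last one on the rotor path from `a` to `w`. -/
noncomputable def prevVertex (Z : Set V) (a : V) (f : V → V) (w : V) : V :=
  if w ∉ Z ∧ w ∈ Function.periodicPts f then f^[Function.minimalPeriod f w - 1] w
  else if h : ∃ n, f^[n + 1] a = w then f^[Nat.find h] a
  else a

theorem iterate_update_eq_of_forall_ne {x : V} {n : ℕ} (h : ∀ i < n, f^[i] x ≠ v) :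
    (Function.update f v w)^[n] x = f^[n] x := by
  induction n with
  | zero => rfl
  | succ n ih =>
    rw [Function.iterate_succ_apply', Function.iterate_succ_apply',
      ih fun i hi => h i (by omega), Function.update_of_ne (h n n.lt_succ_self)]

theorem iterate_update_eq_of_forall_update_ne {x : V} {n : ℕ}
    (h : ∀ i < n, (Function.update f v w)^[i] x ≠ v) :
    (Function.update f v w)^[n] x = f^[n] x := by
  have := iterate_update_eq_of_forall_ne (w := f v) h
  rwa [Function.update_idem, Function.update_eq_self, eq_comm] at this

namespace IsWalkState

theorem exists_update_path (h : IsWalkState Z a v f) :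
    ∃ n, f^[n] a = v ∧ (∀ i < n, f^[i] a ∉ Z ∧ f^[i] a ≠ v) ∧
      ∀ i ≤ n, (Function.update f v w)^[i] a = f^[i] a := by
  obtain ⟨n, hn, hlt⟩ := h.exists_first_hit
  exact ⟨n, hn, hlt, fun i hi => iterate_update_eq_of_forall_ne fun j hj => (hlt j (by omega)).2⟩

theorem exists_iterate_update_eq (h : IsWalkState Z a v f) :
    ∃ n, (Function.update f v w)^[n + 1] a = w := by
  obtain ⟨n, hn, -, hpath⟩ := h.exists_update_path (w := w)
  exact ⟨n, by rw [Function.iterate_succ_apply', hpath n le_rfl, hn, Function.update_self]⟩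

theorem update (h : IsWalkState Z a v f) (hv : v ∉ Z) :
    IsWalkState Z a w (Function.update f v w) := by
  constructor
  · intro x
    have hex := h.rooted x
    have hpath : (Function.update f v w)^[Nat.find hex] x = f^[Nat.find hex] x :=
      iterate_update_eq_of_forall_ne fun i hi heq => Nat.find_min hex hi (heq ▸ Set.mem_insert _ _)
    rcases Nat.find_spec hex with hn | hn
    · refine ⟨Nat.find hex + 1, Or.inl ?_⟩
      rw [Function.iterate_succ_apply', hpath, hn, Function.update_self]
    · exact ⟨Nat.find hex, Or.inr (hpath ▸ hn)⟩
  · obtain ⟨n, hn, hlt, hpath⟩ := h.exists_update_path (w := w)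
    refine ⟨n + 1, by rw [Function.iterate_succ_apply', hpath n le_rfl, hn, Function.update_self],
      fun i hi => ?_⟩
    rw [hpath i (by omega)]
    rcases Nat.lt_succ_iff_lt_or_eq.1 hi with hi | rfl
    exacts [(hlt i hi).1, hn ▸ hv]

/-- By `rooted`, `f` itself has no cycle avoiding `Z ∪ {v}`. -/
theorem exists_iterate_update_eq_of_mem_periodicPts (h : IsWalkState Z a v f)
    (hfix : ∀ z ∈ Z, f z = z) {x : V} (hx : x ∉ Z)
    (hcyc : x ∈ Function.periodicPts (Function.update f v w)) :
    ∃ j < Function.minimalPeriod (Function.update f v w) x, (Function.update f v w)^[j] x = v := by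
  set g := Function.update f v w
  have hk := Function.minimalPeriod_pos_of_mem_periodicPts hcyc
  by_contra! hne
  have hagree (i : ℕ) (hi : i ≤ Function.minimalPeriod g x) : g^[i] x = f^[i] x :=
    iterate_update_eq_of_forall_update_ne fun j hj => hne j (by omega)
  have hper : Function.IsPeriodicPt f (Function.minimalPeriod g x) x := by
    rw [Function.IsPeriodicPt, Function.IsFixedPt, ← hagree _ le_rfl]
    exact Function.isPeriodicPt_minimalPeriod g x
  obtain ⟨m, hm⟩ := h.rooted x
  rw [← hper.iterate_mod_apply, ← hagree _ (Nat.mod_lt _ hk).le] at hm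
  rcases hm with hm | hm
  · exact hne _ (Nat.mod_lt _ hk) hm
  · rw [hagree _ (Nat.mod_lt _ hk).le] at hm
    exact iterate_notMem_of_isPeriodicPt hfix hk hper hx _ hm

theorem prevVertex_update (h : IsWalkState Z a v f) (hwv : w ≠ v)
    (hfix : ∀ z ∈ Z, f z = z) : prevVertex Z a (Function.update f v w) w = v := by
  set g := Function.update f v w
  obtain ⟨n, hn, hlt, hpath⟩ := h.exists_update_path (w := w)
  have hgv : g v = w := Function.update_self v w f
  have hgn : g^[n + 1] a = w := by rw [Function.iterate_succ_apply', hpath n le_rfl, hn, hgv]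
  by_cases hcyc : w ∉ Z ∧ w ∈ Function.periodicPts g
  · rw [prevVertex, if_pos hcyc]
    obtain ⟨j, hj, hjv⟩ : ∃ j < Function.minimalPeriod g w, g^[j] w = v :=
      h.exists_iterate_update_eq_of_mem_periodicPts hfix hcyc.1 hcyc.2
    have hret : Function.IsPeriodicPt g (j + 1) w := by
      rw [Function.IsPeriodicPt, Function.IsFixedPt, Function.iterate_succ_apply', hjv, hgv]
    have := hret.minimalPeriod_le j.succ_pos
    rwa [show Function.minimalPeriod g w - 1 = j by omega]
  · have hex : ∃ m, g^[m + 1] a = w := ⟨n, hgn⟩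
    rw [prevVertex, if_neg hcyc, dif_pos hex]
    suffices Nat.find hex = n by rw [this, hpath n le_rfl, hn]
    refine le_antisymm (Nat.find_min' hex hgn) (not_lt.1 fun hlt' => hcyc ⟨?_, ?_⟩)
    · have hm := Nat.find_spec hex
      rw [hpath _ hlt'] at hm
      obtain hlast | hlt'' := eq_or_lt_of_le (Nat.succ_le_of_lt hlt')
      · exact absurd (hm.symm.trans (hlast ▸ hn)) hwv
      · exact hm ▸ (hlt _ hlt'').1
    · refine ⟨n - Nat.find hex, by omega, ?_⟩
      have hm := Nat.find_spec hex
      calc g^[n - Nat.find hex] w = g^[n - Nat.find hex + (Nat.find hex + 1)] a := by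
            rw [Function.iterate_add_apply, hm]
        _ = w := by rw [show n - Nat.find hex + (Nat.find hex + 1) = n + 1 by omega, hgn]

end IsWalkState

end WalkState

section Bijection

variable [DecidableEq V] {G : SimpleGraph V} {τ : V → V → V} {Z : Set V} {a : V} {ρ : V → V}

theorem isWalkState_rotorWalk (hρ : ∀ x, ∃ n, ρ^[n] x ∈ Z) (t : ℕ) :
    IsWalkState Z a (rotorWalk τ Z a ρ t).1 (rotorWalk τ Z a ρ t).2 := by
  induction t with
  | zero =>
    exact ⟨fun x => (hρ x).imp fun _ => Or.inr, 0, rfl, fun _ h => absurd h (Nat.not_lt_zero _)⟩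
  | succ t ih =>
    by_cases h : (rotorWalk τ Z a ρ t).1 ∈ Z
    · rwa [rotorWalk_succ_of_mem h]
    · rw [rotorWalk_snd_succ_of_notMem h]
      exact ih.update h

theorem finalConfig_eq {T : ℕ} (hT : (rotorWalk τ Z a ρ T).1 ∈ Z) :
    finalConfig τ Z a ρ = (rotorWalk τ Z a ρ T).2 := by
  have hconst (x : V) : ∃ t, ∀ s, t ≤ s → (rotorWalk τ Z a ρ s).2 x = (rotorWalk τ Z a ρ t).2 x :=
    ⟨T, fun s hs => by rw [rotorWalk_eq_of_mem hT hs]⟩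
  funext x
  rw [finalConfig, eventualVal, dif_pos (hconst x)]
  have hc := (hconst x).choose_spec
  rw [← hc _ (le_max_left _ T), rotorWalk_eq_of_mem hT (le_max_right _ T)]

theorem finalConfig_mem_SFset (hτ : IsMechanism G τ) (hρ : ρ ∈ SFset G Z) {T : ℕ}
    (hT : (rotorWalk τ Z a ρ T).1 ∈ Z) :
    finalConfig τ Z a ρ ∈ SFset G Z := by
  rw [finalConfig_eq hT]
  refine ⟨fun x hx => rotorWalk_snd_mem_neighborSet hτ (hρ.1 x hx) T, fun x => ?_,
    fun x hx => (rotorWalk_snd_of_mem hx T).trans (hρ.2.2 x hx)⟩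
  simpa [Set.insert_eq_of_mem hT] using (isWalkState_rotorWalk (a := a) (τ := τ) hρ.2.1 T).rooted x

/-- The inverse of `rotorStep` on the states of the walk; `(τ v)^[deg v - 1]` undoes one turn of
the rotor at `v`. -/
noncomputable def rotorUnstep (G : SimpleGraph V) [∀ v : V, Fintype (G.neighborSet v)]
    (τ : V → V → V) (Z : Set V) (a : V) (p : V × (V → V)) : V × (V → V) :=
  let v := prevVertex Z a p.2 p.1
  (v, Function.update p.2 v ((τ v)^[G.degree v - 1] (p.2 v)))

theorem rotorUnstep_rotorWalk_succ [∀ v : V, Fintype (G.neighborSet v)] (hτ : IsMechanism G τ)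
    (hρ : ρ ∈ SFset G Z) {t : ℕ} (h : (rotorWalk τ Z a ρ t).1 ∉ Z) :
    rotorUnstep G τ Z a (rotorWalk τ Z a ρ (t + 1)) = rotorWalk τ Z a ρ t := by
  have hfv := rotorWalk_snd_mem_neighborSet (Z := Z) (a := a) hτ (hρ.1 _ h) t
  have hstate := isWalkState_rotorWalk (a := a) (τ := τ) hρ.2.1 t
  have hfix (z : V) (hz : z ∈ Z) :=
    (rotorWalk_snd_of_mem (a := a) (τ := τ) hz t).trans (hρ.2.2 z hz)
  rw [rotorWalk_succ_of_notMem h]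
  set v := (rotorWalk τ Z a ρ t).1
  set f := (rotorWalk τ Z a ρ t).2
  have hprev : prevVertex Z a (Function.update f v (τ v (f v))) (τ v (f v)) = v :=
    hstate.prevVertex_update ((hτ v).1.mapsTo hfv).ne' hfix
  have hback : (τ v)^[G.degree v - 1] (τ v (f v)) = f v := by
    rw [← Function.iterate_succ_apply, Nat.succ_eq_add_one, Nat.sub_add_cancel
      (G.degree_pos_iff_exists_adj v |>.2 ⟨_, hfv⟩), ← hτ.minimalPeriod_eq_degree hfv]
    exact Function.isPeriodicPt_minimalPeriod _ _
  rw [rotorUnstep]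
  dsimp only
  rw [hprev, Function.update_self, hback, Function.update_idem, Function.update_eq_self]

theorem rotorUnstep_iterate_rotorWalk [∀ v : V, Fintype (G.neighborSet v)]
    (hτ : IsMechanism G τ) (hρ : ρ ∈ SFset G Z) {T : ℕ}
    (hT : ∀ s < T, (rotorWalk τ Z a ρ s).1 ∉ Z) {j : ℕ} (hj : j ≤ T) :
    (rotorUnstep G τ Z a)^[j] (rotorWalk τ Z a ρ T) = rotorWalk τ Z a ρ (T - j) := by
  induction j with
  | zero => rfl
  | succ j ih =>
    rw [Function.iterate_succ_apply', ih (by omega), show T - j = T - (j + 1) + 1 by omega,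
      rotorUnstep_rotorWalk_succ hτ hρ (hT _ (by omega))]

/-- Running the walk backwards from a common state recovers the initial configuration; the
walk from `a` cannot come back to the state `(a, ρ₁)` because `ρ₁` has no cycles. -/
theorem eq_of_rotorWalk_eq [∀ v : V, Fintype (G.neighborSet v)] (hτ : IsMechanism G τ)
    (ha : a ∉ Z) {ρ₁ ρ₂ : V → V} (h₁ : ρ₁ ∈ SFset G Z) (h₂ : ρ₂ ∈ SFset G Z) {T₁ T₂ : ℕ}
    (hT₁ : ∀ s < T₁, (rotorWalk τ Z a ρ₁ s).1 ∉ Z) (hT₂ : ∀ s < T₂, (rotorWalk τ Z a ρ₂ s).1 ∉ Z)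
    (hle : T₁ ≤ T₂) (heq : rotorWalk τ Z a ρ₁ T₁ = rotorWalk τ Z a ρ₂ T₂) : ρ₁ = ρ₂ := by
  have hback := rotorUnstep_iterate_rotorWalk hτ h₂ hT₂ hle
  rw [← heq, rotorUnstep_iterate_rotorWalk hτ h₁ hT₁ le_rfl, Nat.sub_self] at hback
  obtain ⟨s, hs⟩ := Nat.exists_eq_add_of_le hle
  rcases s with _ | s
  · simpa [hs] using congrArg Prod.snd hback
  rw [hs, show T₁ + (s + 1) - T₁ = s + 1 by omega] at hback
  have hsZ : (rotorWalk τ Z a ρ₂ s).1 ∉ Z := hT₂ s (by omega)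
  obtain ⟨n, hn⟩ := (isWalkState_rotorWalk (a := a) (τ := τ) h₂.2.1 s).exists_iterate_update_eq
    (w := (rotorWalk τ Z a ρ₂ (s + 1)).1)
  rw [← rotorWalk_snd_succ_of_notMem hsZ, ← hback] at hn
  exact absurd hn (not_isPeriodicPt_of_mem_SFset h₁ ha n.succ_pos)

theorem exists_hittingTime {ρ : V → V} (h : ∃ t, (rotorWalk τ Z a ρ t).1 ∈ Z) :
    ∃ T, (rotorWalk τ Z a ρ T).1 ∈ Z ∧ ∀ s < T, (rotorWalk τ Z a ρ s).1 ∉ Z :=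
  ⟨Nat.find h, Nat.find_spec h, fun _ => Nat.find_min h⟩

theorem finalConfig_injOn [∀ v : V, Fintype (G.neighborSet v)] [Fintype {y // y ∉ Z}]
    (hconn : G.Connected) (hZ : Z.Nonempty) (hτ : IsMechanism G τ) (ha : a ∉ Z) :
    Set.InjOn (finalConfig τ Z a) (SFset G Z) := by
  intro ρ₁ h₁ ρ₂ h₂ heq
  obtain ⟨T₁, hT₁, hlt₁⟩ := exists_hittingTime (exists_rotorWalk_mem (a := a) hconn hZ hτ h₁.1)
  obtain ⟨T₂, hT₂, hlt₂⟩ := exists_hittingTime (exists_rotorWalk_mem (a := a) hconn hZ hτ h₂.1)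
  rw [finalConfig_eq hT₁, finalConfig_eq hT₂] at heq
  have hpos := (isWalkState_rotorWalk (a := a) (τ := τ) h₁.2.1 T₁).eq_of_mem
    (heq ▸ isWalkState_rotorWalk h₂.2.1 T₂) hT₁ hT₂
  rcases le_total T₁ T₂ with hle | hle
  · exact eq_of_rotorWalk_eq hτ ha h₁ h₂ hlt₁ hlt₂ hle (Prod.ext hpos heq)
  · exact (eq_of_rotorWalk_eq hτ ha h₂ h₁ hlt₂ hlt₁ hle (Prod.ext hpos heq).symm).symm

end Bijection

section SpanningForests

variable {G : SimpleGraph V} {Z : Set V}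

theorem SFset_finite [∀ v, Finite (G.neighborSet v)] [Finite {y // y ∉ Z}] :
    (SFset G Z).Finite := by
  refine Set.finite_coe_iff.1 (Finite.of_injective
    (fun ρ : SFset G Z => fun y : {y // y ∉ Z} => (⟨ρ.1 y, ρ.2.1 y y.2⟩ : G.neighborSet y.1))
    fun ρ₁ ρ₂ h => Subtype.ext (funext fun x => ?_))
  by_cases hx : x ∈ Z
  · rw [ρ₁.2.2.2 x hx, ρ₂.2.2.2 x hx]
  · exact congrArg Subtype.val (congrFun h ⟨x, hx⟩)

/-- Pointing every vertex outside `Z` to a neighbour strictly closer to `Z` gives a spanning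
forest. -/
theorem SFset_nonempty (hconn : G.Connected) (hZ : Z.Nonempty) : (SFset G Z).Nonempty := by
  let d : V → ℕ := fun x => sInf ((G.dist x ·) '' Z)
  have hcloser (x : V) (hx : x ∉ Z) : ∃ y, G.Adj x y ∧ d y < d x := by
    obtain ⟨z, hz, hdz⟩ := Nat.sInf_mem (hZ.image (G.dist x ·))
    obtain ⟨p, hp⟩ := (hconn x z).exists_walk_length_eq_dist
    cases p with
    | nil => exact absurd hz hx
    | @cons _ y _ hxy q =>
      refine ⟨y, hxy, lt_of_le_of_lt (Nat.sInf_le ⟨z, hz, rfl⟩) ?_⟩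
      have hq := SimpleGraph.dist_le q
      have hdz' : G.dist x z = d x := hdz
      rw [SimpleGraph.Walk.length_cons] at hp
      change G.dist y z < d x
      omega
  choose next hnext using hcloser
  refine ⟨fun x => if hx : x ∈ Z then x else next x hx, fun x hx => ?_, fun x => ?_,
    fun x hx => dif_pos hx⟩
  · simpa [hx] using (hnext x hx).1
  · induction hdx : d x using Nat.strong_induction_on generalizing x with
    | _ n ih =>
      by_cases hx : x ∈ Z
      · exact ⟨0, hx⟩
      obtain ⟨ℓ, hℓ⟩ := ih _ (hdx ▸ (hnext x hx).2) (next x hx) rfl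
      exact ⟨ℓ + 1, by rwa [Function.iterate_succ_apply, dif_neg hx]⟩

end SpanningForests

section Odometer

variable [DecidableEq V] {G : SimpleGraph V} [∀ v : V, Fintype (G.neighborSet v)]
  {τ : V → V → V} {Z : Set V} {a : V} {ρ : V → V}

theorem visitTimes_eq {T : ℕ} (hT : (rotorWalk τ Z a ρ T).1 ∈ Z) {x : V} (hx : x ∉ Z) :
    visitTimes τ Z a ρ {x} = ↑((Finset.range T).filter fun t => (rotorWalk τ Z a ρ t).1 = x) := by
  ext t
  simp only [visitTimes, Set.mem_singleton_iff, Finset.coe_filter, Finset.mem_range,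
    Set.mem_ofPred_eq]
  constructor
  · rintro ⟨htx, -⟩
    refine ⟨not_le.1 fun hTt => hx ?_, htx⟩
    rwa [← htx, rotorWalk_eq_of_mem hT hTt]
  · rintro ⟨htT, htx⟩
    refine ⟨htx, fun s hst hs => hx ?_⟩
    rwa [← htx, rotorWalk_eq_of_mem hs hst.le]

theorem ncard_visitTimes {T : ℕ} (hT : (rotorWalk τ Z a ρ T).1 ∈ Z) {x : V} (hx : x ∉ Z) :
    (visitTimes τ Z a ρ {x}).ncard = visitCount τ Z a ρ x T := by
  rw [visitTimes_eq hT hx, Set.ncard_coe_finset, Finset.card_filter, visitCount]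

theorem transitionCount_eq_killedP_mul (hτ : IsMechanism G τ)
    (hρ : ∀ x ∉ Z, ρ x ∈ G.neighborSet x) (y : {y // y ∉ Z}) {x : V} (hx : x ∉ Z) (t : ℕ) :
    (transitionCount τ Z a ρ y x t : ℝ) = killedP G Z y ⟨x, hx⟩ *
      (visitCount τ Z a ρ y t + turnsUntil τ y ((rotorWalk τ Z a ρ t).2 y) x
        - turnsUntil τ y (ρ y) x) := by
  by_cases hyx : G.Adj y x
  · have hid := degree_mul_transitionCount_add_turnsUntil (a := a) hτ y.2 (hρ y y.2) hyx t
    have hdeg : (G.degree y : ℝ) ≠ 0 :=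
      Nat.cast_ne_zero.2 (G.degree_pos_iff_exists_adj y |>.2 ⟨x, hyx⟩).ne'
    rw [killedP, if_pos hyx, one_div_mul_eq_div, eq_div_iff hdeg]
    have hid' := congrArg (Nat.cast : ℕ → ℝ) hid
    push_cast at hid'
    linarith
  · rw [transitionCount_eq_zero_of_not_adj hτ hρ y.2 hyx, killedP, if_neg hyx, zero_mul,
      Nat.cast_zero]

theorem ncard_visitTimes_eq [Fintype {y // y ∉ Z}] (hτ : IsMechanism G τ)
    (hρ : ∀ x ∉ Z, ρ x ∈ G.neighborSet x) (hterm : ∃ T, (rotorWalk τ Z a ρ T).1 ∈ Z) {x : V}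
    (hx : x ∉ Z) :
    ((visitTimes τ Z a ρ {x}).ncard : ℝ) = (if a = x then 1 else 0) +
      ∑ y : {y // y ∉ Z}, killedP G Z y ⟨x, hx⟩ * ((visitTimes τ Z a ρ {y.1}).ncard
        + turnsUntil τ y (finalConfig τ Z a ρ y) x - turnsUntil τ y (ρ y) x) := by
  obtain ⟨T, hT⟩ := hterm
  have hstop : visitCount τ Z a ρ x (T + 1) = visitCount τ Z a ρ x T := by
    rw [visitCount, Finset.sum_range_succ, if_neg (ne_of_mem_of_not_mem hT hx), add_zero,
      visitCount]
  rw [ncard_visitTimes hT hx, ← hstop, visitCount_succ hx, finalConfig_eq hT]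
  push_cast
  congr 1
  refine Finset.sum_congr rfl fun y _ => ?_
  rw [transitionCount_eq_killedP_mul hτ hρ y hx, ncard_visitTimes hT y.2]

theorem finalConfig_bijOn [Fintype {y // y ∉ Z}] (hconn : G.Connected) (hZ : Z.Nonempty)
    (hτ : IsMechanism G τ) (ha : a ∉ Z) :
    Set.BijOn (finalConfig τ Z a) (SFset G Z) (SFset G Z) :=
  (SFset_finite.injOn_iff_bijOn_of_mapsTo fun _ hρ =>
    let ⟨_, hT⟩ := exists_rotorWalk_mem (a := a) hconn hZ hτ hρ.1
    finalConfig_mem_SFset hτ hρ hT).1 (finalConfig_injOn hconn hZ hτ ha)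

noncomputable def averageOdometer (G : SimpleGraph V) (τ : V → V → V) (Z : Set V) (a x : V) :
    ℝ :=
  (∑ᶠ ρ ∈ SFset G Z, ((visitTimes τ Z a ρ {x}).ncard : ℝ)) / (SFset G Z).ncard

theorem finsum_ncard_visitTimes_eq [Fintype {y // y ∉ Z}] (hconn : G.Connected)
    (hZ : Z.Nonempty) (hτ : IsMechanism G τ) (ha : a ∉ Z) {x : V} (hx : x ∉ Z) :
    ∑ᶠ ρ ∈ SFset G Z, ((visitTimes τ Z a ρ {x}).ncard : ℝ)
      = (if a = x then ((SFset G Z).ncard : ℝ) else 0) + ∑ y : {y // y ∉ Z},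
        killedP G Z y ⟨x, hx⟩ * ∑ᶠ ρ ∈ SFset G Z, ((visitTimes τ Z a ρ {y.1}).ncard : ℝ) := by
  have hfin : (SFset G Z).Finite := SFset_finite
  have hcancel (y : {y // y ∉ Z}) :
      ∑ᶠ ρ ∈ SFset G Z, (turnsUntil τ y (finalConfig τ Z a ρ y) x : ℝ)
        = ∑ᶠ ρ ∈ SFset G Z, (turnsUntil τ y (ρ y) x : ℝ) :=
    finsum_mem_eq_of_bijOn _ (finalConfig_bijOn hconn hZ hτ ha) fun _ _ => rfl
  simp only [finsum_mem_eq_finite_toFinset_sum _ hfin, Set.ncard_eq_toFinset_card _ hfin]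
    at hcancel ⊢
  rw [Finset.sum_congr rfl fun ρ hρ => ncard_visitTimes_eq hτ (hfin.mem_toFinset.1 hρ).1
    (exists_rotorWalk_mem hconn hZ hτ (hfin.mem_toFinset.1 hρ).1) hx, Finset.sum_add_distrib,
    Finset.sum_comm]
  simp only [← Finset.mul_sum, Finset.sum_sub_distrib, Finset.sum_add_distrib, hcancel,
    add_sub_cancel_right]
  split_ifs <;> simp

theorem averageOdometer_eq [Fintype {y // y ∉ Z}] (hconn : G.Connected) (hZ : Z.Nonempty)
    (hτ : IsMechanism G τ) (ha : a ∉ Z) {x : V} (hx : x ∉ Z) :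
    averageOdometer G τ Z a x = (if a = x then 1 else 0) +
      ∑ y : {y // y ∉ Z}, averageOdometer G τ Z a y * killedP G Z y ⟨x, hx⟩ := by
  have hpos : (0 : ℝ) < (SFset G Z).ncard :=
    Nat.cast_pos.2 ((Set.ncard_pos SFset_finite).2 (SFset_nonempty hconn hZ))
  rw [averageOdometer, finsum_ncard_visitTimes_eq hconn hZ hτ ha hx, add_div, Finset.sum_div]
  congr 1
  · split_ifs
    exacts [div_self hpos.ne', zero_div _]
  · exact Finset.sum_congr rfl fun y _ => by rw [averageOdometer]; ring

end Odometer

theorem averageOdometer_mul_one_sub_killedP [DecidableEq V] {G : SimpleGraph V}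
    [∀ v : V, Fintype (G.neighborSet v)] {τ : V → V → V} {Z : Set V} [Fintype {y // y ∉ Z}]
    (hconn : G.Connected) (hZ : Z.Nonempty) (hτ : IsMechanism G τ) :
    (Matrix.of fun a x : {y // y ∉ Z} => averageOdometer G τ Z a x) * (1 - killedP G Z) = 1 := by
  ext a x
  rw [Matrix.mul_sub, Matrix.mul_one, Matrix.sub_apply, Matrix.mul_apply, Matrix.of_apply,
    averageOdometer_eq hconn hZ hτ a.2 x.2, Matrix.one_apply]
  simp only [Matrix.of_apply, add_sub_cancel_right, Subtype.ext_iff]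

/-- If `Z` is nonempty with `V ∖ Z` finite, then `I - P_Z` is
invertible and, for `a, x ∈ V ∖ Z`, the average over `ρ ∈ SF(Z)` of the odometer
`u(a,Z;ρ)(x)` (finite for every such `ρ`) equals the Green function
`((I - P_Z)⁻¹)_{a,x}`. -/
theorem stmt5 {V : Type u} [DecidableEq V] (G : SimpleGraph V) (hconn : G.Connected)
    [∀ v : V, Fintype (G.neighborSet v)] (τ : V → V → V) (hτ : IsMechanism G τ)
    (Z : Set V) (hZ : Z.Nonempty) [Fintype {y : V // y ∉ Z}]
    (a x : V) (ha : a ∉ Z) (hx : x ∉ Z) :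
    IsUnit ((1 : Matrix {y : V // y ∉ Z} {y : V // y ∉ Z} ℝ) - killedP G Z) ∧
    (∀ ρ ∈ SFset G Z, (visitTimes τ Z a ρ {x}).Finite) ∧
    (∑ᶠ ρ ∈ SFset G Z, ((visitTimes τ Z a ρ {x}).ncard : ℝ)) / (SFset G Z).ncard
      = ((1 - killedP G Z)⁻¹) ⟨a, ha⟩ ⟨x, hx⟩ := by
  have hinv := averageOdometer_mul_one_sub_killedP (τ := τ) hconn hZ hτ
  refine ⟨(Matrix.isUnit_iff_isUnit_det _).2 (Matrix.isUnit_det_of_left_inverse hinv),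
    fun ρ hρ => ?_, by rw [Matrix.inv_eq_left_inv hinv]; rfl⟩
  obtain ⟨T, hT⟩ := exists_rotorWalk_mem (a := a) hconn hZ hτ hρ.1
  rw [visitTimes_eq hT hx]
  exact Finset.finite_toSet _
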